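/- arXiv:2407.17051 — 4 statements merged into one kernel-verified Lean document; each statement's English description precedes it below -/
import Mathlib

section
/- Let D be an oriented graph (a digraph with no loops and at most one arc between any pair of vertices) that is converse invariant, i.e., for every tournament T on any finite vertex set, the number of subdigraphs of T isomorphic to D equals the number isomorphic to the converse -D. Then the polynomials P_D(x) = ∑_{u ∈ V(D)} (1+x)^{d⁺(u)} (1−x)^{d⁻(u)} and P_{−D}(x) = ∑_{u ∈ V(D)} (1+x)^{d⁻(u)} (1−x)^{d⁺(u)} are equal as polynomials in x. -/
open Finset Polynomial

/-- An oriented graph: loopless, at most one arc between any pair of vertices. -/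
def IsOrgraph {V : Type*} (A : V → V → Prop) : Prop :=
  ∀ u v, A u v → u ≠ v ∧ ¬ A v u

/-- A tournament: loopless, exactly one arc between any two distinct vertices. -/
def IsTournament {W : Type*} (B : W → W → Prop) : Prop :=
  (∀ v, ¬ B v v) ∧ ∀ u v, u ≠ v → (B u v ↔ ¬ B v u)

/-- The number of subdigraphs of `B` isomorphic to `A`: a subdigraph is a pair of a
vertex set and an arc relation contained in `B` with all endpoints in the vertex set. -/
noncomputable def copyCount {V W : Type*} (A : V → V → Prop) (B : W → W → Prop) : ℕ :=
  Nat.card {p : Set W × (W → W → Prop) //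
    (∀ a b, p.2 a b → B a b ∧ a ∈ p.1 ∧ b ∈ p.1) ∧
    ∃ e : V ≃ p.1, ∀ a b, A a b ↔ p.2 (e a : W) (e b : W)}

/-- `A` is converse invariant: every finite tournament contains as many copies of `A`
as of its converse. -/
def ConverseInvariant {V : Type*} (A : V → V → Prop) : Prop :=
  ∀ (W : Type) (_ : Fintype W) (B : W → W → Prop), IsTournament B →
    copyCount A B = copyCount (fun a b => A b a) B

/-- Out-degree. -/
noncomputable def outDeg {V : Type*} (A : V → V → Prop) (u : V) : ℕ :=
  Nat.card {v // A u v}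

/-- In-degree. -/
noncomputable def inDeg {V : Type*} (A : V → V → Prop) (u : V) : ℕ :=
  Nat.card {v // A v u}

/-- The polynomial `P_D(x) = ∑_u (1+x)^{d⁺(u)} (1-x)^{d⁻(u)}`. -/
noncomputable def degPoly {V : Type*} [Fintype V] (A : V → V → Prop) : Polynomial ℤ :=
  ∑ u : V, (1 + X) ^ outDeg A u * (1 - X) ^ inDeg A u

/-- `A` is an orientation of the simple graph `G`. -/
def IsOrientation {V : Type*} (G : SimpleGraph V) (A : V → V → Prop) : Prop :=
  (∀ u v, A u v → ¬ A v u) ∧ ∀ u v, G.Adj u v ↔ (A u v ∨ A v u)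

/-!
Adjoin a bottom vertex `⊥` to `V` and give a tournament `T` on `W = V ∪ {⊥}` the weight
`∏_v (1 ± X)`, with `+` when `⊥ → v` in `T`. Multiplying copy counts by `|Aut D| = |Aut (-D)|`
turns converse invariance into equality of the weighted numbers of embeddings of `D` and `-D`.
For a fixed embedding `φ`, the weighted number of tournaments containing `φ(D)` factorizes over
the pairs of `W`: a pair hit by no arc contributes `2` (as `(1 + X) + (1 - X)` or `1 + 1`), and
an arc at `⊥ = φ u` contributes `1 + X` or `1 - X` according to its direction. So the total is
`2 ^ (N - |A(D)|) * (N₀ + K * P_D)`, where `N` counts the pairs, `N₀` the embeddings avoiding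
`⊥`, and `K`, the number of embeddings sending a given vertex to `⊥`, does not depend on the
vertex. Comparing with `-D` gives `P_D = P_{-D}`.
-/

open scoped Classical

theorem IsOrgraph.converse {V : Type*} {R : V → V → Prop} (hR : IsOrgraph R) :
    IsOrgraph fun a b => R b a :=
  fun u v huv => ⟨(hR v u huv).1.symm, (hR v u huv).2⟩

section Arcs

variable {V : Type*} [Fintype V]

noncomputable def arcs (R : V → V → Prop) : Finset (V × V) := {p | R p.1 p.2}

@[simp]
theorem mem_arcs {R : V → V → Prop} {p : V × V} : p ∈ arcs R ↔ R p.1 p.2 := by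
  simp [arcs]

theorem card_arcs_converse (R : V → V → Prop) : #(arcs fun a b => R b a) = #(arcs R) :=
  card_equiv (Equiv.prodComm V V) (by simp)

theorem outDeg_eq_card (R : V → V → Prop) (u : V) : outDeg R u = #{v | R u v} := by
  rw [outDeg, Nat.card_eq_fintype_card, Fintype.card_subtype]

theorem prod_arcs_ite_fst {M : Type*} [CommMonoid M] (R : V → V → Prop) (u : V) (c : M) :
    ∏ p ∈ arcs R, (if p.1 = u then c else 1) = c ^ outDeg R u := by
  rw [← prod_filter, prod_const, outDeg_eq_card]
  congr 1
  refine card_nbij' Prod.snd (fun v => (u, v)) ?_ ?_ ?_ ?_ <;> intro p <;> aesop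

theorem prod_arcs_ite_snd {M : Type*} [CommMonoid M] (R : V → V → Prop) (u : V) (c : M) :
    ∏ p ∈ arcs R, (if p.2 = u then c else 1) = c ^ inDeg R u := by
  rw [show inDeg R u = outDeg (fun a b => R b a) u from rfl, ← prod_arcs_ite_fst]
  exact prod_equiv (Equiv.prodComm V V) (by simp) fun _ _ => by congr

theorem injOn_arcs {W : Type*} {R : V → V → Prop} (hR : IsOrgraph R) (φ : V ↪ W) :
    Set.InjOn (fun p : V × V => s(φ p.1, φ p.2)) (arcs R) := by
  rintro ⟨a, b⟩ hp ⟨c, d⟩ hq h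
  simp only [mem_coe, mem_arcs, Sym2.eq_iff] at hp hq h
  rcases h with ⟨hac, hbd⟩ | ⟨had, hbc⟩
  · rw [φ.injective hac, φ.injective hbd]
  · rw [φ.injective had, φ.injective hbc] at hp
    exact absurd hq (hR d c hp).2

end Arcs

section Copies

variable {V W : Type*}

abbrev SubdigraphEmbedding (R : V → V → Prop) (B : W → W → Prop) : Type _ :=
  {φ : V ↪ W // ∀ u v, R u v → B (φ u) (φ v)}

def Copy (R : V → V → Prop) (B : W → W → Prop) : Type _ :=
  {p : Set W × (W → W → Prop) //
    (∀ a b, p.2 a b → B a b ∧ a ∈ p.1 ∧ b ∈ p.1) ∧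
    ∃ e : V ≃ p.1, ∀ a b, R a b ↔ p.2 (e a : W) (e b : W)}

namespace Copy

variable {R : V → V → Prop} {B : W → W → Prop}

def rel (c : Copy R B) (x y : c.1.1) : Prop := c.1.2 x y

noncomputable def iso (c : Copy R B) : R ≃r c.rel :=
  ⟨c.2.2.choose, fun {a b} => (c.2.2.choose_spec a b).symm⟩

theorem range_eq (c : Copy R B) (e : R ≃r c.rel) : Set.range (fun u => (e u : W)) = c.1.1 := by
  ext a
  refine ⟨?_, fun ha => ⟨e.symm ⟨a, ha⟩, by simp⟩⟩
  rintro ⟨u, rfl⟩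
  exact (e u).2

theorem rel_iff (c : Copy R B) (e : R ≃r c.rel) {a b : W} :
    c.1.2 a b ↔ ∃ u v, R u v ∧ (e u : W) = a ∧ (e v : W) = b := by
  refine ⟨fun h => ?_, ?_⟩
  · obtain ⟨-, ha, hb⟩ := c.2.1 a b h
    refine ⟨e.symm ⟨a, ha⟩, e.symm ⟨b, hb⟩, e.map_rel_iff.1 ?_, by simp, by simp⟩
    simpa [rel] using h
  · rintro ⟨u, v, h, rfl, rfl⟩
    exact e.map_rel_iff.2 h

theorem eq_of_iso {c c' : Copy R B} (e : R ≃r c.rel) (e' : R ≃r c'.rel)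
    (h : ∀ u, (e u : W) = e' u) : c = c' := by
  refine Subtype.ext (Prod.ext ?_ (funext₂ fun a b => propext ?_))
  · rw [← c.range_eq e, ← c'.range_eq e']
    simp [h]
  · rw [c.rel_iff e, c'.rel_iff e']
    simp [h]

def embedding (c : Copy R B) (e : R ≃r c.rel) : SubdigraphEmbedding R B :=
  ⟨e.toEquiv.toEmbedding.trans (Function.Embedding.subtype _),
    fun _ _ h => (c.2.1 _ _ (e.map_rel_iff.2 h)).1⟩

def ofEmbedding (φ : SubdigraphEmbedding R B) : Copy R B :=
  ⟨(Set.range φ.1, fun a b => ∃ u v, R u v ∧ φ.1 u = a ∧ φ.1 v = b),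
    by rintro a b ⟨u, v, h, rfl, rfl⟩; exact ⟨φ.2 u v h, ⟨u, rfl⟩, ⟨v, rfl⟩⟩,
    Equiv.ofInjective φ.1 φ.1.injective, fun a b => by simp⟩

noncomputable def isoOfEmbedding (φ : SubdigraphEmbedding R B) : R ≃r (ofEmbedding φ).rel :=
  ⟨Equiv.ofInjective φ.1 φ.1.injective, fun {a b} =>
    ⟨fun ⟨u, v, h, hu, hv⟩ => by rwa [φ.1.injective hu, φ.1.injective hv] at h,
      fun h => ⟨a, b, h, rfl, rfl⟩⟩⟩

end Copy

theorem card_subdigraphEmbedding (R : V → V → Prop) (B : W → W → Prop) :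
    Nat.card (SubdigraphEmbedding R B) = copyCount R B * Nat.card (R ≃r R) := by
  change _ = Nat.card (Copy R B) * _
  rw [← Nat.card_prod]
  refine (Nat.card_eq_of_bijective
    (fun x : Copy R B × (R ≃r R) => x.1.embedding (x.2.trans x.1.iso)) ⟨?_, fun φ => ?_⟩).symm
  · rintro ⟨c, α⟩ ⟨c', α'⟩ h
    have hφ (u : V) : ((α.trans c.iso) u : W) = (α'.trans c'.iso) u :=
      congrArg (fun φ : SubdigraphEmbedding R B => φ.1 u) h
    obtain rfl := Copy.eq_of_iso _ _ hφ
    congr 1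
    ext u
    exact c.iso.injective (Subtype.ext (hφ u))
  · let c := Copy.ofEmbedding φ
    refine ⟨(c, (Copy.isoOfEmbedding φ).trans c.iso.symm), Subtype.ext ?_⟩
    ext u
    exact congrArg Subtype.val (c.iso.apply_symm_apply (Copy.isoOfEmbedding φ u))

theorem card_relIso_converse (R : V → V → Prop) :
    Nat.card (R ≃r R) = Nat.card ((fun a b => R b a) ≃r fun a b => R b a) :=
  Nat.card_congr ⟨RelIso.swap, RelIso.swap, fun _ => rfl, fun _ => rfl⟩

theorem ConverseInvariant.card_subdigraphEmbedding_eq {A : V → V → Prop}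
    (hA : ConverseInvariant A) {W : Type} [Fintype W] {B : W → W → Prop} (hB : IsTournament B) :
    Nat.card (SubdigraphEmbedding A B) = Nat.card (SubdigraphEmbedding (fun a b => A b a) B) := by
  rw [card_subdigraphEmbedding, card_subdigraphEmbedding, hA W inferInstance B hB,
    card_relIso_converse]

theorem natCast_card_subdigraphEmbedding [Fintype V] [Fintype W] {S : Type*} [CommSemiring S]
    (R : V → V → Prop) (B : W → W → Prop) :
    (Nat.card (SubdigraphEmbedding R B) : S) =
      ∑ φ : V ↪ W, if ∀ u v, R u v → B (φ u) (φ v) then 1 else 0 := by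
  rw [Nat.card_eq_fintype_card, Fintype.card_subtype, sum_boole]

end Copies

section Orient

variable {W : Type*} [LinearOrder W]

/-- The tournament on `W` in which `g z` records whether the pair `z` is oriented upwards. The
values of `g` on the diagonal are irrelevant, so each tournament arises `2 ^ card W` times. -/
def orient (g : Sym2 W → Bool) (a b : W) : Prop :=
  a ≠ b ∧ (g s(a, b) = true ↔ a < b)

theorem isTournament_orient (g : Sym2 W → Bool) : IsTournament (orient g) := by
  refine ⟨fun v h => h.1 rfl, fun a b hab => ?_⟩
  rcases hab.lt_or_gt with h | h <;> simp [orient, hab, hab.symm, Sym2.eq_swap, h, h.not_gt]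

variable {V : Type*} [Fintype V] {R : V → V → Prop}

theorem forall_orient_iff (hR : IsOrgraph R) (φ : V ↪ W) (g : Sym2 W → Bool) :
    (∀ u v, R u v → orient g (φ u) (φ v)) ↔
      ∀ p ∈ arcs R, g s(φ p.1, φ p.2) = decide (φ p.1 < φ p.2) := by
  simp only [mem_arcs, Prod.forall, orient]
  refine forall₂_congr fun u v => imp_congr_right fun h => ?_
  rw [and_iff_right (φ.injective.ne (hR u v h).1)]
  cases g s(φ u, φ v) <;> simp

variable [Fintype W] {S : Type*} [CommSemiring S]

theorem sum_prod_mul_boole_orient (hR : IsOrgraph R) (φ : V ↪ W) (w : Sym2 W → Bool → S)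
    (hw : ∀ z, w z true + w z false = 2) :
    ∑ g : Sym2 W → Bool,
        (∏ z, w z (g z)) * (if ∀ u v, R u v → orient g (φ u) (φ v) then 1 else 0) =
      2 ^ (Fintype.card (Sym2 W) - #(arcs R)) *
        ∏ p ∈ arcs R, w s(φ p.1, φ p.2) (decide (φ p.1 < φ p.2)) := by
  set e : V × V → Sym2 W := fun p => s(φ p.1, φ p.2)
  set dir : V × V → Bool := fun p => decide (φ p.1 < φ p.2)
  let compat (z : Sym2 W) (b : Bool) : Prop := ∀ p ∈ arcs R, e p = z → b = dir p
  have hcompat (g : Sym2 W → Bool) :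
      (∀ u v, R u v → orient g (φ u) (φ v)) ↔ ∀ z, compat z (g z) := by
    rw [forall_orient_iff hR]
    exact ⟨fun h z p hp hpz => hpz ▸ h p hp, fun h p hp => h _ p hp rfl⟩
  have hfactor (g : Sym2 W → Bool) :
      (∏ z, w z (g z)) * (if ∀ u v, R u v → orient g (φ u) (φ v) then 1 else 0) =
        ∏ z, w z (g z) * (if compat z (g z) then 1 else 0) := by
    rw [prod_mul_distrib, Fintype.prod_boole]
    exact congrArg _ (if_congr (hcompat g) rfl rfl)
  have hsum : ∑ g : Sym2 W → Bool, ∏ z, w z (g z) * (if compat z (g z) then 1 else 0) =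
      ∏ z, ∑ b, w z b * (if compat z b then 1 else 0) := by
    convert (Fintype.prod_sum fun z b => w z b * (if compat z b then 1 else 0)).symm
  have hforced {p} (hp : p ∈ arcs R) :
      ∑ b, w (e p) b * (if compat (e p) b then 1 else 0) = w (e p) (dir p) := by
    have : ∀ b, compat (e p) b ↔ b = dir p := fun b =>
      ⟨fun h => h p hp rfl, fun h q hq hqp => by rw [h, injOn_arcs hR φ hq hp hqp]⟩
    simp [this]
  have hfree {z} (hz : z ∉ (arcs R).image e) :
      ∑ b, w z b * (if compat z b then 1 else 0) = 2 := by
    have : ∀ b, compat z b := fun b p hp hpz => absurd (mem_image_of_mem e hp) (hpz ▸ hz)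
    rw [Fintype.sum_bool, if_pos (this true), if_pos (this false), mul_one, mul_one, hw]
  simp only [hfactor]
  rw [hsum, ← prod_mul_prod_compl ((arcs R).image e), prod_image (injOn_arcs hR φ),
    prod_congr rfl fun p hp => hforced hp, prod_congr rfl fun z hz => hfree (mem_compl.1 hz),
    prod_const, card_compl, card_image_of_injOn (injOn_arcs hR φ), mul_comm]

theorem sum_prod_mul_card_subdigraphEmbedding_orient (hR : IsOrgraph R)
    (w : Sym2 W → Bool → S) (hw : ∀ z, w z true + w z false = 2) :
    ∑ g : Sym2 W → Bool, (∏ z, w z (g z)) * Nat.card (SubdigraphEmbedding R (orient g)) =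
      2 ^ (Fintype.card (Sym2 W) - #(arcs R)) *
        ∑ φ : V ↪ W, ∏ p ∈ arcs R, w s(φ p.1, φ p.2) (decide (φ p.1 < φ p.2)) := by
  simp_rw [natCast_card_subdigraphEmbedding, mul_sum]
  rw [sum_comm]
  exact sum_congr rfl fun φ _ => sum_prod_mul_boole_orient hR φ w hw

end Orient

theorem card_filter_apply_eq_eq_card_filter_apply_eq {V W : Type*} [Fintype V] [Fintype W]
    (w : W) (u u' : V) : #{φ : V ↪ W | φ u = w} = #{φ : V ↪ W | φ u' = w} :=
  card_equiv (Equiv.embeddingCongr (Equiv.swap u u') (Equiv.refl W)) fun φ => by simp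

theorem card_filter_apply_eq_bot_pos {V : Type*} [Fintype V] (u : V) :
    0 < #{φ : V ↪ WithBot V | φ u = ⊥} :=
  card_pos.2 ⟨Function.Embedding.coeWithBot.trans (Equiv.swap ⊥ (u : WithBot V)).toEmbedding,
    by simp⟩

section Bot

variable {V W : Type*} [LinearOrder W] [OrderBot W] {R : V → V → Prop}

noncomputable def botWeight (z : Sym2 W) (b : Bool) : ℤ[X] :=
  if ⊥ ∈ z then (if b then 1 + X else 1 - X) else 1

theorem botWeight_true_add_false (z : Sym2 W) : botWeight z true + botWeight z false = 2 := by
  simp only [botWeight, if_true, Bool.false_eq_true, if_false]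
  split_ifs <;> ring

theorem botWeight_arc (φ : V ↪ W) {u v : V} (huv : u ≠ v) :
    botWeight s(φ u, φ v) (decide (φ u < φ v)) =
      (if φ u = ⊥ then 1 + X else 1) * (if φ v = ⊥ then 1 - X else 1) := by
  have hne : φ u ≠ φ v := φ.injective.ne huv
  by_cases hu : φ u = ⊥
  · have hv : φ v ≠ ⊥ := hu ▸ hne.symm
    simp [botWeight, hu, hv, bot_lt_iff_ne_bot]
  by_cases hv : φ v = ⊥
  · simp [botWeight, hu, hv]
  · simp [botWeight, Sym2.mem_iff, Ne.symm hu, Ne.symm hv, hu, hv]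

variable [Fintype V]

theorem prod_botWeight_of_apply_eq_bot (hR : IsOrgraph R) {φ : V ↪ W} {u : V} (hu : φ u = ⊥) :
    ∏ p ∈ arcs R, botWeight s(φ p.1, φ p.2) (decide (φ p.1 < φ p.2)) =
      (1 + X) ^ outDeg R u * (1 - X) ^ inDeg R u := by
  have h (v : V) : φ v = ⊥ ↔ v = u :=
    ⟨fun hv => φ.injective (hv.trans hu.symm), fun h => h ▸ hu⟩
  rw [prod_congr rfl fun p hp => botWeight_arc φ (hR _ _ (mem_arcs.1 hp)).1, prod_mul_distrib]
  simp only [h]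
  rw [prod_arcs_ite_fst, prod_arcs_ite_snd]

theorem prod_botWeight_of_forall_ne_bot {φ : V ↪ W} (hφ : ∀ u, φ u ≠ ⊥) :
    ∏ p ∈ arcs R, botWeight s(φ p.1, φ p.2) (decide (φ p.1 < φ p.2)) = 1 :=
  prod_eq_one fun p _ => by simp [botWeight, Sym2.mem_iff, Ne.symm (hφ _)]

theorem prod_botWeight_eq (hR : IsOrgraph R) (φ : V ↪ W) :
    ∏ p ∈ arcs R, botWeight s(φ p.1, φ p.2) (decide (φ p.1 < φ p.2)) =
      (if ∀ u, φ u ≠ ⊥ then 1 else 0) +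
        ∑ u, if φ u = ⊥ then (1 + X) ^ outDeg R u * (1 - X) ^ inDeg R u else 0 := by
  by_cases hφ : ∀ u, φ u ≠ ⊥
  · simp [hφ, prod_botWeight_of_forall_ne_bot hφ]
  obtain ⟨u, hu⟩ := not_forall_not.1 hφ
  rw [if_neg hφ, zero_add, prod_botWeight_of_apply_eq_bot hR hu, sum_eq_single u
    (fun v _ hvu => if_neg fun hv => hvu (φ.injective (hv.trans hu.symm))) (by simp), if_pos hu]

variable [Fintype W]

theorem sum_prod_botWeight (hR : IsOrgraph R) (u₀ : V) :
    ∑ φ : V ↪ W, ∏ p ∈ arcs R, botWeight s(φ p.1, φ p.2) (decide (φ p.1 < φ p.2)) =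
      #{φ : V ↪ W | ∀ u, φ u ≠ ⊥} + #{φ : V ↪ W | φ u₀ = ⊥} * degPoly R := by
  simp_rw [prod_botWeight_eq hR]
  rw [sum_add_distrib, sum_boole, sum_comm, degPoly, mul_sum]
  congr 1
  refine sum_congr rfl fun u _ => ?_
  rw [← sum_filter, sum_const, nsmul_eq_mul]
  congr 2
  convert card_filter_apply_eq_eq_card_filter_apply_eq (⊥ : W) u u₀

theorem sum_botWeight_mul_card_subdigraphEmbedding (hR : IsOrgraph R) (u₀ : V) :
    ∑ g : Sym2 W → Bool, (∏ z, botWeight z (g z)) * Nat.card (SubdigraphEmbedding R (orient g)) =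
      2 ^ (Fintype.card (Sym2 W) - #(arcs R)) *
        (#{φ : V ↪ W | ∀ u, φ u ≠ ⊥} + #{φ : V ↪ W | φ u₀ = ⊥} * degPoly R) := by
  rw [sum_prod_mul_card_subdigraphEmbedding_orient hR botWeight botWeight_true_add_false,
    sum_prod_botWeight hR]

end Bot

/-- If an oriented graph is converse invariant then `P_D = P_{-D}`. -/
theorem stmt_0 {V : Type} [Fintype V] (A : V → V → Prop)
    (hA : IsOrgraph A) (hCI : ConverseInvariant A) :
    degPoly A = degPoly (fun a b => A b a) := by
  rcases isEmpty_or_nonempty V with hV | ⟨⟨u₀⟩⟩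
  · simp [degPoly]
  let _ : LinearOrder V := LinearOrder.lift' _ (Fintype.equivFin V).injective
  have h : ∑ g : Sym2 (WithBot V) → Bool, (∏ z, botWeight z (g z)) *
        (Nat.card (SubdigraphEmbedding A (orient g)) : ℤ[X]) =
      ∑ g : Sym2 (WithBot V) → Bool, (∏ z, botWeight z (g z)) *
        (Nat.card (SubdigraphEmbedding (fun a b => A b a) (orient g)) : ℤ[X]) :=
    sum_congr rfl fun g _ => by rw [hCI.card_subdigraphEmbedding_eq (isTournament_orient g)]
  rw [sum_botWeight_mul_card_subdigraphEmbedding hA u₀,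
    sum_botWeight_mul_card_subdigraphEmbedding hA.converse u₀, card_arcs_converse] at h
  have hK : (#{φ : V ↪ WithBot V | φ u₀ = ⊥} : ℤ[X]) ≠ 0 := by
    exact_mod_cast (card_filter_apply_eq_bot_pos u₀).ne'
  exact mul_left_cancel₀ hK (add_left_cancel (mul_left_cancel₀ (pow_ne_zero _ two_ne_zero) h))
end

section
/- Let D be an orientation of a d-regular graph such that P_D(x) = P_{−D}(x) as polynomials. Then the multiset of out-degrees of D equals the multiset of in-degrees of D, and consequently the degree-pair multisets Deg(D) and Deg(−D) coincide. -/
open Finset Polynomial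

/-!
Since every vertex has `d⁺(u) + d⁻(u) = d`, the Cayley substitution `x = (1 - t) / (1 + t)`
turns `(1 + x)^{d⁺(u)} (1 - x)^{d⁻(u)}` into `(2 / (1 + t))^d t^{d⁻(u)}`. Hence `P_D = P_{-D}`
gives `∑_u t^{d⁻(u)} = ∑_u t^{d⁺(u)}`, and comparing coefficients shows that the in- and
out-degree multisets agree. The degree pairs are `(k, d - k)`, so they are determined by
the first coordinates.
-/

theorem Multiset.map_eq_map_of_sum_X_pow_eq {R ι : Type*} [Semiring R] [CharZero R]
    (s : Finset ι) (f g : ι → ℕ)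
    (h : ∑ i ∈ s, (X : R[X]) ^ f i = ∑ i ∈ s, (X : R[X]) ^ g i) :
    s.val.map f = s.val.map g := by
  classical
  ext n
  have hcoeff := congrArg (coeff · n) h
  simp only [finsetSum_coeff, coeff_X_pow, Finset.sum_boole, Nat.cast_inj] at hcoeff
  simpa only [Multiset.count_map, ← Finset.filter_val, ← Finset.card_def, eq_comm] using hcoeff

theorem Multiset.map_pair_eq_map_sub {ι : Type*} (s : Multiset ι) (f g : ι → ℕ) {d : ℕ}
    (hfg : ∀ i, f i + g i = d) :
    s.map (fun i => (f i, g i)) = (s.map f).map (fun k => (k, d - k)) := by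
  rw [Multiset.map_map]
  exact Multiset.map_congr rfl fun i _ => by simp [← hfg i]

@[simp]
theorem outDeg_swap {V : Type*} (A : V → V → Prop) (u : V) :
    outDeg (fun a b => A b a) u = inDeg A u := rfl

@[simp]
theorem inDeg_swap {V : Type*} (A : V → V → Prop) (u : V) :
    inDeg (fun a b => A b a) u = outDeg A u := rfl

theorem cayley_pow_mul_pow {K : Type*} [Field K] {t : K} (ht : 1 + t ≠ 0) {o i d : ℕ}
    (hd : o + i = d) :
    (1 + (1 - t) / (1 + t)) ^ o * (1 - (1 - t) / (1 + t)) ^ i = (2 / (1 + t)) ^ d * t ^ i := by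
  have hplus : 1 + (1 - t) / (1 + t) = 2 / (1 + t) := by field_simp; ring
  have hminus : 1 - (1 - t) / (1 + t) = 2 / (1 + t) * t := by field_simp; ring
  rw [hplus, hminus, mul_pow, ← mul_assoc, ← pow_add, hd]

theorem aeval_cayley_degPoly {V K : Type*} [Fintype V] [Field K] [Algebra ℤ K]
    (A : V → V → Prop) {d : ℕ} (hreg : ∀ v, outDeg A v + inDeg A v = d)
    {t : K} (ht : 1 + t ≠ 0) :
    aeval ((1 - t) / (1 + t)) (degPoly A) = (2 / (1 + t)) ^ d * ∑ v, t ^ inDeg A v := by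
  simp only [degPoly, map_sum, map_mul, map_pow, map_add, map_sub, map_one, aeval_X,
    cayley_pow_mul_pow ht (hreg _), Finset.mul_sum]

theorem sum_X_pow_outDeg_eq_sum_X_pow_inDeg {V : Type*} [Fintype V] (A : V → V → Prop) {d : ℕ}
    (hreg : ∀ v, outDeg A v + inDeg A v = d) (hP : degPoly A = degPoly (fun a b => A b a)) :
    ∑ v, (X : ℚ[X]) ^ outDeg A v = ∑ v, (X : ℚ[X]) ^ inDeg A v := by
  set t : RatFunc ℚ := RatFunc.X
  have ht : 1 + t ≠ 0 := by
    simpa [t, ← RatFunc.algebraMap_X, add_comm] using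
      RatFunc.algebraMap_ne_zero (X_add_C_ne_zero (1 : ℚ))
  have hscale : (2 / (1 + t)) ^ d ≠ 0 := pow_ne_zero _ (div_ne_zero two_ne_zero ht)
  have hconv : ∀ v, outDeg (fun a b => A b a) v + inDeg (fun a b => A b a) v = d :=
    fun v => by simpa only [outDeg_swap, inDeg_swap, add_comm] using hreg v
  have hsum : aeval ((1 - t) / (1 + t)) (degPoly A) =
      aeval ((1 - t) / (1 + t)) (degPoly fun a b => A b a) := by rw [hP]
  rw [aeval_cayley_degPoly A hreg ht, aeval_cayley_degPoly _ hconv ht] at hsum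
  apply RatFunc.algebraMap_injective ℚ
  simpa [t, ← RatFunc.algebraMap_X] using (mul_left_cancel₀ hscale hsum).symm

theorem stmt_7_general {V : Type} [Fintype V] (d : ℕ)
    (A : V → V → Prop)
    (hreg : ∀ v : V, outDeg A v + inDeg A v = d)
    (hP : degPoly A = degPoly (fun a b => A b a)) :
    (Finset.univ.val.map fun v : V => outDeg A v) =
      (Finset.univ.val.map fun v : V => inDeg A v) ∧
    (Finset.univ.val.map fun v : V => (outDeg A v, inDeg A v)) =
      (Finset.univ.val.map fun v : V => (inDeg A v, outDeg A v)) := by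
  have hdeg := Multiset.map_eq_map_of_sum_X_pow_eq _ _ _
    (sum_X_pow_outDeg_eq_sum_X_pow_inDeg A hreg hP)
  refine ⟨hdeg, ?_⟩
  rw [Multiset.map_pair_eq_map_sub _ _ _ hreg,
    Multiset.map_pair_eq_map_sub _ _ _ fun v => (Nat.add_comm _ _).trans (hreg v), hdeg]

/-- For an orientation of a d-regular graph with `P_D = P_{-D}`, the out-degree
multiset equals the in-degree multiset, and the degree-pair multisets coincide. -/
theorem stmt_7 {V : Type} [Fintype V] (d : ℕ)
    (A : V → V → Prop) (hA : IsOrgraph A)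
    (hreg : ∀ v : V, outDeg A v + inDeg A v = d)
    (hP : degPoly A = degPoly (fun a b => A b a)) :
    (Finset.univ.val.map fun v : V => outDeg A v) =
      (Finset.univ.val.map fun v : V => inDeg A v) ∧
    (Finset.univ.val.map fun v : V => (outDeg A v, inDeg A v)) =
      (Finset.univ.val.map fun v : V => (inDeg A v, outDeg A v)) :=
  stmt_7_general d A hreg hP
end

section
/- For every integer k ≥ 3 there exists an oriented graph D with maximum total degree Δ(D) = k such that D is not isomorphic to −D and D is converse invariant (f_T(D) = f_T(−D) for every tournament T). -/
open Finset Polynomial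

/-!
The witness `D` is the disjoint union of an out-cherry `c → {w, l}` with an out-star and an
in-star with `k` leaves each, so `Δ(D) = k`. It is not isomorphic to `-D`, since it has a vertex
of out-degree `2` but none of in-degree `2`.

The two stars together form a self-converse digraph, so `-D` is an in-cherry plus the same two
stars. Given a copy of `D` in a tournament `T`, its cherry centre `c` is its only vertex of
out-degree `2` (as `k ≠ 2`). If `T` orients the leaves as `w → l`, replacing the arc `c → w` by
`w → l` turns the out-cherry into the in-cherry `{c, w} → l` on the same transitive triangle, and
yields a copy of `-D` on the same vertex set. The same operation on converses undoes it: `l` is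
then the only vertex of in-degree `2`, and `c` is the in-neighbour of `l` that beats the other one.
-/

open Function Set

section

variable {V V' W : Type*}

lemma outDeg_comp_of_injective {A : V → V → Prop} {R : W → W → Prop} {ε : V → W}
    (hε : Injective ε) (he : ∀ a b, A a b ↔ R (ε a) (ε b)) {v : V}
    (hv : ∀ b, R (ε v) b → b ∈ range ε) : outDeg R (ε v) = outDeg A v := by
  have himage : {b | R (ε v) b} = ε '' {a | A v a} := by
    ext b
    constructor
    · intro hb
      obtain ⟨a, rfl⟩ := hv b hb
      exact ⟨a, (he v a).2 hb, rfl⟩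
    · rintro ⟨a, ha, rfl⟩
      exact (he v a).1 ha
  exact (congrArg Nat.card (congrArg Set.Elem himage)).trans (Nat.card_image_of_injective hε _)

lemma outDeg_comp_equiv (f : V' ≃ V) (A : V → V → Prop) (v : V') :
    outDeg (fun a b => A (f a) (f b)) v = outDeg A (f v) :=
  (outDeg_comp_of_injective f.injective (fun _ _ => Iff.rfl) fun b _ => f.surjective b).symm

lemma inDeg_comp_equiv (f : V' ≃ V) (A : V → V → Prop) (v : V') :
    inDeg (fun a b => A (f a) (f b)) v = inDeg A (f v) :=
  outDeg_comp_equiv f (flip A) v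

lemma outDeg_eq_zero_of_forall_not {R : W → W → Prop} {a : W} (h : ∀ b, ¬ R a b) :
    outDeg R a = 0 := by
  have : IsEmpty {b // R a b} := ⟨fun b => h b b.2⟩
  exact Nat.card_of_isEmpty

lemma eq_or_eq_of_outDeg_eq_two {R : W → W → Prop} {c w l z : W} (h : outDeg R c = 2)
    (hw : R c w) (hl : R c l) (hwl : w ≠ l) (hz : R c z) : z = w ∨ z = l := by
  obtain ⟨y, -, hy⟩ := (Nat.card_eq_two_iff' (⟨w, hw⟩ : {b // R c b})).1 h
  by_contra! hne
  have hly : (⟨l, hl⟩ : {b // R c b}) = y := hy _ fun h => hwl (congrArg Subtype.val h).symm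
  have hzy : (⟨z, hz⟩ : {b // R c b}) = y := hy _ fun h => hne.1 (congrArg Subtype.val h)
  exact hne.2 (congrArg Subtype.val (hzy.trans hly.symm))

lemma not_antiautomorphism_of_outDeg {A : V → V → Prop} {m : ℕ} (hout : ∃ v, outDeg A v = m)
    (hin : ∀ v, inDeg A v ≠ m) : ¬ ∃ e : V ≃ V, ∀ a b, A a b ↔ A (e b) (e a) := by
  rintro ⟨e, he⟩
  obtain ⟨v, hv⟩ := hout
  have hdeg : outDeg A (e (e.symm v)) = inDeg A (e.symm v) :=
    outDeg_comp_of_injective (A := flip A) e.injective (fun a b => he b a) fun b _ => e.surjective b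
  exact hin _ (by rw [← hdeg, e.apply_symm_apply, hv])

lemma outDeg_flip (r : V → V → Prop) (a : V) : outDeg (flip r) a = inDeg r a := rfl

lemma inDeg_flip (r : V → V → Prop) (a : V) : inDeg (flip r) a = outDeg r a := rfl

lemma copyCount_comp_equiv (f : V' ≃ V) (A : V → V → Prop) (B : W → W → Prop) :
    copyCount (fun a b => A (f a) (f b)) B = copyCount A B :=
  Nat.card_congr <| Equiv.subtypeEquivRight fun _ => and_congr_right' <|
    ⟨fun ⟨e, he⟩ => ⟨f.symm.trans e, fun a b => by simpa using he (f.symm a) (f.symm b)⟩,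
      fun ⟨e, he⟩ => ⟨f.trans e, fun a b => he (f a) (f b)⟩⟩

lemma ConverseInvariant.comp_equiv {A : V → V → Prop} (h : ConverseInvariant A) (f : V' ≃ V) :
    ConverseInvariant fun a b => A (f a) (f b) := fun W hW B hB =>
  (copyCount_comp_equiv f A B).trans ((h W hW B hB).trans (copyCount_comp_equiv f (flip A) B).symm)

lemma IsOrgraph.comp {A : V → V → Prop} (h : IsOrgraph A) (f : V' → V) :
    IsOrgraph fun a b => A (f a) (f b) :=
  fun _ _ huv => ⟨fun h' => (h _ _ huv).1 (congrArg f h'), (h _ _ huv).2⟩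

lemma sup_totalDeg_comp_equiv [Fintype V] [Fintype V'] (f : V' ≃ V) (A : V → V → Prop) :
    (univ.sup fun v => outDeg (fun a b => A (f a) (f b)) v + inDeg (fun a b => A (f a) (f b)) v)
      = univ.sup fun v => outDeg A v + inDeg A v := by
  simp only [outDeg_comp_equiv, inDeg_comp_equiv]
  rw [← Finset.map_univ_equiv f, Finset.sup_map]
  rfl

lemma IsTournament.flip {B : W → W → Prop} (hB : IsTournament B) : IsTournament (flip B) :=
  ⟨hB.1, fun u v huv => hB.2 v u huv.symm⟩

section Cherry

def reroute (R : W → W → Prop) (c w l : W) (a b : W) : Prop :=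
  (R a b ∧ ¬ (a = c ∧ b = w)) ∨ (a = w ∧ b = l)

-- Reroutes the arc `c → w` of every out-cherry `c → {w, l}` of `R` with `B w l` to `w → l`.
def flipCherry (B R : W → W → Prop) (a b : W) : Prop :=
  (R a b ∧ ¬ (outDeg R a = 2 ∧ ∃ l, R a l ∧ B b l)) ∨
    ∃ c, outDeg R c = 2 ∧ R c a ∧ R c b ∧ B a b

def unflipCherry (B R : W → W → Prop) : W → W → Prop :=
  flip (flipCherry (flip B) (flip R))

variable {B R : W → W → Prop} {c w l : W}

lemma flipCherry_eq_reroute (hB : IsTournament B) (hc : ∀ v, outDeg R v = 2 ↔ v = c)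
    (hw : R c w) (hl : R c l) (hwl : B w l) : flipCherry B R = reroute R c w l := by
  have hne : w ≠ l := by rintro rfl; exact hB.1 w hwl
  have hlw : ¬ B l w := (hB.2 w l hne).1 hwl
  have hout : ∀ z, R c z → z = w ∨ z = l :=
    fun z => eq_or_eq_of_outDeg_eq_two ((hc c).2 rfl) hw hl hne
  funext a b
  apply propext
  simp only [flipCherry, reroute, hc]
  constructor
  · rintro (⟨hab, hn⟩ | ⟨_, rfl, ha, hb, hab⟩)
    · exact Or.inl ⟨hab, by rintro ⟨rfl, rfl⟩; exact hn ⟨rfl, l, hl, hwl⟩⟩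
    · right
      rcases hout a ha with rfl | rfl <;> rcases hout b hb with rfl | rfl
      all_goals first | exact ⟨rfl, rfl⟩ | exact absurd hab (hB.1 _) | exact absurd hab hlw
  · rintro (⟨hab, hn⟩ | ⟨rfl, rfl⟩)
    · refine Or.inl ⟨hab, ?_⟩
      rintro ⟨rfl, l', hl', hbl'⟩
      rcases hout b hab with rfl | rfl
      · exact hn ⟨rfl, rfl⟩
      · rcases hout l' hl' with rfl | rfl
        · exact hlw hbl'
        · exact hB.1 _ hbl'
    · exact Or.inr ⟨c, rfl, hw, hl, hwl⟩

lemma flip_reroute_flip_reroute (hcw : R c w) (hwl : ¬ R w l) :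
    flip (reroute (flip (reroute R c w l)) l w c) = R := by
  funext a b
  simp only [flip, reroute]
  apply propext
  constructor
  · rintro (⟨(⟨hab, -⟩ | ⟨rfl, rfl⟩), hn⟩ | ⟨rfl, rfl⟩)
    exacts [hab, absurd ⟨rfl, rfl⟩ hn, hcw]
  · intro hab
    by_cases hc : a = c ∧ b = w
    · exact Or.inr ⟨hc.2, hc.1⟩
    · refine Or.inl ⟨Or.inl ⟨hab, hc⟩, ?_⟩
      rintro ⟨rfl, rfl⟩
      exact hwl hab

lemma reroute_comp {A : V → V → Prop} {ε : V → W} (hε : Injective ε)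
    (he : ∀ a b, A a b ↔ R (ε a) (ε b)) (c w l a b : V) :
    reroute R (ε c) (ε w) (ε l) (ε a) (ε b) ↔ reroute A c w l a b := by
  simp only [reroute, he, hε.eq_iff]

lemma unflipCherry_reroute (hB : IsTournament B)
    (hl : ∀ v, inDeg (reroute R c w l) v = 2 ↔ v = l) (hcw : R c w) (hcl : R c l) (hBcw : B c w) (hwl : ¬ R w l) (hne : w ≠ l) :
    unflipCherry B (reroute R c w l) = R := by
  rw [unflipCherry, flipCherry_eq_reroute (R := flip (reroute R c w l)) hB.flip hl
    (Or.inr ⟨rfl, rfl⟩) (Or.inl ⟨hcl, fun h => hne h.2.symm⟩) hBcw]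
  exact flip_reroute_flip_reroute hcw hwl

end Cherry

section Copy

def IsCopy (A : V → V → Prop) (B : W → W → Prop) (S : Set W) (R : W → W → Prop) : Prop :=
  (∀ a b, R a b → B a b ∧ a ∈ S ∧ b ∈ S) ∧ ∃ e : V ≃ S, ∀ a b, A a b ↔ R (e a) (e b)

variable {A : V → V → Prop} {B R : W → W → Prop} {S : Set W}

lemma IsCopy.converse (h : IsCopy A B S R) : IsCopy (flip A) (flip B) S (flip R) :=
  ⟨fun a b hab => (h.1 b a hab).imp_right And.symm, h.2.imp fun _ he a b => he b a⟩

lemma outDeg_eq_two_iff_of_copy (hRS : ∀ a b, R a b → a ∈ S ∧ b ∈ S) (e : V ≃ S)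
    (he : ∀ a b, A a b ↔ R (e a) (e b)) {c : V} (hc : ∀ v, outDeg A v = 2 ↔ v = c) (a : W) :
    outDeg R a = 2 ↔ a = e c := by
  by_cases ha : a ∈ S
  · obtain ⟨v, rfl⟩ : ∃ v, (e v : W) = a := ⟨e.symm ⟨a, ha⟩, by simp⟩
    rw [outDeg_comp_of_injective (ε := fun v => (e v : W))
      (Subtype.val_injective.comp e.injective) he fun b hb => ⟨e.symm ⟨b, (hRS _ b hb).2⟩, by simp⟩,
      hc, Subtype.val_injective.eq_iff, e.injective.eq_iff]
  · rw [outDeg_eq_zero_of_forall_not fun b hb => ha (hRS a b hb).1]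
    exact iff_of_false (by decide) fun h => ha (h ▸ (e c).2)

theorem IsCopy.flipCherry_spec {c : V} (hdeg : ∀ v, outDeg A v = 2 ↔ v = c)
    (hrer : ∀ w l, w ≠ l → A c w → A c l →
      ¬ A w l ∧ ∃ σ : V ≃ V, σ c = l ∧ ∀ a b, A b a ↔ reroute A c w l (σ a) (σ b))
    (hB : IsTournament B) (hR : IsCopy A B S R) :
    IsCopy (flip A) B S (flipCherry B R) ∧ unflipCherry B (flipCherry B R) = R := by
  obtain ⟨hRB, e, he⟩ := hR
  set ε : V → W := fun v => e v
  have hε : Injective ε := Subtype.val_injective.comp e.injective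
  obtain ⟨⟨x, hx⟩, ⟨y, hy⟩, hxy, -⟩ := Nat.card_eq_two_iff.1 ((hdeg c).2 rfl)
  obtain ⟨w, l, hwl, hcw, hcl, hBwl⟩ : ∃ w l, w ≠ l ∧ A c w ∧ A c l ∧ B (ε w) (ε l) := by
    have hxy : x ≠ y := fun h => hxy (Subtype.ext h)
    by_cases h : B (ε x) (ε y)
    · exact ⟨x, y, hxy, hx, hy, h⟩
    · exact ⟨y, x, hxy.symm, hy, hx, (hB.2 _ _ (hε.ne hxy.symm)).2 h⟩
  obtain ⟨hnwl, σ, hσc, hσ⟩ := hrer w l hwl hcw hcl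
  have hRS a b (hab : R a b) : a ∈ S ∧ b ∈ S := (hRB a b hab).2
  rw [flipCherry_eq_reroute hB (outDeg_eq_two_iff_of_copy hRS e he hdeg) ((he c w).1 hcw)
    ((he c l).1 hcl) hBwl]
  have hiso a b : A b a ↔ reroute R (ε c) (ε w) (ε l) (ε (σ a)) (ε (σ b)) :=
    (hσ a b).trans (reroute_comp hε he _ _ _ _ _).symm
  have hsupp : ∀ a b, reroute R (ε c) (ε w) (ε l) a b → B a b ∧ a ∈ S ∧ b ∈ S := by
    rintro a b (⟨hab, -⟩ | ⟨rfl, rfl⟩)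
    exacts [hRB a b hab, ⟨hBwl, (e w).2, (e l).2⟩]
  refine ⟨⟨hsupp, σ.trans e, hiso⟩, unflipCherry_reroute hB ?_ ((he c w).1 hcw) ((he c l).1 hcl)
    (hRB _ _ ((he c w).1 hcw)).1 (fun h => hnwl ((he w l).2 h)) (hε.ne hwl)⟩
  have hl := outDeg_eq_two_iff_of_copy (R := flip (reroute R (ε c) (ε w) (ε l)))
    (fun a b hab => (hsupp b a hab).2.symm) (σ.trans e) (fun a b => hiso b a) hdeg
  rwa [Equiv.trans_apply, hσc] at hl

end Copy

theorem converseInvariant_of_cherry {A : V → V → Prop} {c : V}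
    (hdeg : ∀ v, outDeg A v = 2 ↔ v = c)
    (hrer : ∀ w l, w ≠ l → A c w → A c l →
      ¬ A w l ∧ ∃ σ : V ≃ V, σ c = l ∧ ∀ a b, A b a ↔ reroute A c w l (σ a) (σ b)) :
    ConverseInvariant A := by
  intro W _ B hB
  have hfwd {S R} (h : IsCopy A B S R) := h.flipCherry_spec hdeg hrer hB
  have hbwd {S R} (h : IsCopy (flip A) B S R) :
      IsCopy A B S (unflipCherry B R) ∧ flipCherry B (unflipCherry B R) = R := by
    obtain ⟨h₁, h₂⟩ := h.converse.flipCherry_spec hdeg hrer hB.flip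
    exact ⟨h₁.converse, congrArg flip h₂⟩
  exact Nat.card_congr
    { toFun := fun p => ⟨(p.1.1, flipCherry B p.1.2), (hfwd p.2).1⟩
      invFun := fun p => ⟨(p.1.1, unflipCherry B p.1.2), (hbwd p.2).1⟩
      left_inv := fun p => Subtype.ext (Prod.ext rfl (hfwd p.2).2)
      right_inv := fun p => Subtype.ext (Prod.ext rfl (hbwd p.2).2) }

section Stars

variable (r : V → V → Prop) (s : V' → V' → Prop)

lemma outDeg_liftRel_inl (a : V) : outDeg (Sum.LiftRel r s) (.inl a) = outDeg r a :=
  outDeg_comp_of_injective Sum.inl_injective (by simp) fun b hb => by cases hb; simp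

lemma outDeg_liftRel_inr (a : V') : outDeg (Sum.LiftRel r s) (.inr a) = outDeg s a :=
  outDeg_comp_of_injective Sum.inr_injective (by simp) fun b hb => by cases hb; simp

lemma inDeg_liftRel_inl (a : V) : inDeg (Sum.LiftRel r s) (.inl a) = inDeg r a :=
  outDeg_comp_of_injective (A := flip r) (R := flip (Sum.LiftRel r s)) Sum.inl_injective
    (by simp [flip]) fun b hb => by cases hb; simp

lemma inDeg_liftRel_inr (a : V') : inDeg (Sum.LiftRel r s) (.inr a) = inDeg s a :=
  outDeg_comp_of_injective (A := flip s) (R := flip (Sum.LiftRel r s)) Sum.inr_injective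
    (by simp [flip]) fun b hb => by cases hb; simp

def outStar (n : ℕ) (a b : Option (Fin n)) : Prop :=
  a = none ∧ b ≠ none

variable {n : ℕ}

lemma outDeg_outStar_none : outDeg (outStar n) none = n := by
  have : {b | outStar n none b} = range some := by
    ext b
    simp [outStar, Option.ne_none_iff_exists', eq_comm]
  rw [outDeg, ← Set.coe_ofPred, this, Nat.card_range_of_injective (Option.some_injective _),
    Nat.card_fin]

lemma outDeg_outStar_some (i : Fin n) : outDeg (outStar n) (some i) = 0 :=
  outDeg_eq_zero_of_forall_not fun _ h => Option.some_ne_none i h.1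

lemma inDeg_outStar_none : inDeg (outStar n) none = 0 :=
  outDeg_eq_zero_of_forall_not (R := flip (outStar n)) fun _ h => h.2 rfl

lemma inDeg_outStar_some (i : Fin n) : inDeg (outStar n) (some i) = 1 :=
  Nat.card_eq_one_iff_exists.2 ⟨⟨none, rfl, Option.some_ne_none i⟩, fun b => Subtype.ext b.2.1⟩

end Stars

-- The relabelling is the 3-cycle `none ↦ some j ↦ some i ↦ none`.
lemma outStar_two_flip_iff_reroute {i j : Fin 2} (hij : i ≠ j) (a b : Option (Fin 2)) :
    outStar 2 b a ↔ reroute (outStar 2) none (some i) (some j)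
      (((Equiv.swap (some j) (some i)).trans (Equiv.swap none (some j))) a)
      (((Equiv.swap (some j) (some i)).trans (Equiv.swap none (some j))) b) := by
  fin_cases i <;> fin_cases j <;> simp at hij <;>
    rcases a with _ | a <;> rcases b with _ | b <;> (try fin_cases a) <;> (try fin_cases b) <;>
    simp [reroute, outStar, Equiv.swap_apply_def]

section CherryStars

variable {k : ℕ}

def cherryStars (k : ℕ) : Option (Fin 2) ⊕ Option (Fin k) ⊕ Option (Fin k) →
    Option (Fin 2) ⊕ Option (Fin k) ⊕ Option (Fin k) → Prop :=
  Sum.LiftRel (outStar 2) (Sum.LiftRel (outStar k) (flip (outStar k)))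

lemma isOrgraph_cherryStars (k : ℕ) : IsOrgraph (cherryStars k) := by
  rintro ((_ | a) | (_ | a) | (_ | a)) ((_ | b) | (_ | b) | (_ | b)) h <;>
    simp_all [cherryStars, outStar, flip]

attribute [local simp] outDeg_flip inDeg_flip outDeg_liftRel_inl outDeg_liftRel_inr
  inDeg_liftRel_inl inDeg_liftRel_inr outDeg_outStar_none outDeg_outStar_some inDeg_outStar_none
  inDeg_outStar_some

lemma outDeg_cherryStars_eq_two_iff (hk : k ≠ 2) (v) :
    outDeg (cherryStars k) v = 2 ↔ v = .inl none := by
  rcases v with (_ | a) | (_ | a) | (_ | a) <;> simp [cherryStars, hk]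

lemma inDeg_cherryStars_ne_two (hk : k ≠ 2) (v) : inDeg (cherryStars k) v ≠ 2 := by
  rcases v with (_ | a) | (_ | a) | (_ | a) <;> simp [cherryStars, hk]

lemma totalDeg_cherryStars_le (hk : 2 ≤ k) (v) :
    outDeg (cherryStars k) v + inDeg (cherryStars k) v ≤ k := by
  rcases v with (_ | a) | (_ | a) | (_ | a) <;> simp [cherryStars] <;> omega

lemma totalDeg_cherryStars_center (k : ℕ) :
    outDeg (cherryStars k) (.inr (.inl none)) + inDeg (cherryStars k) (.inr (.inl none)) = k := by
  simp [cherryStars]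

lemma cherryStars_reroute (k : ℕ) (w l : Option (Fin 2) ⊕ Option (Fin k) ⊕ Option (Fin k))
    (hwl : w ≠ l) (hw : cherryStars k (.inl none) w) (hl : cherryStars k (.inl none) l) :
    ¬ cherryStars k w l ∧ ∃ σ : _ ≃ _, σ (.inl none) = l ∧
      ∀ a b, cherryStars k b a ↔ reroute (cherryStars k) (.inl none) w l (σ a) (σ b) := by
  obtain ⟨i, rfl⟩ : ∃ i, w = .inl (some i) := by
    rcases w with (_ | i) | _ <;> simp_all [cherryStars, outStar]
  obtain ⟨j, rfl⟩ : ∃ j, l = .inl (some j) := by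
    rcases l with (_ | j) | _ <;> simp_all [cherryStars, outStar]
  have hij : i ≠ j := by simpa using hwl
  refine ⟨by simp [cherryStars, outStar],
    Equiv.sumCongr ((Equiv.swap (some j) (some i)).trans (Equiv.swap none (some j)))
      (Equiv.sumComm _ _), by simp [Equiv.swap_apply_of_ne_of_ne], ?_⟩
  rintro (a | a | a) (b | b | b)
  · exact Sum.liftRel_inl_inl.trans <| (outStar_two_flip_iff_reroute hij a b).trans
      (reroute_comp (R := cherryStars k) Sum.inl_injective (fun _ _ => Sum.liftRel_inl_inl.symm)
        _ _ _ _ _).symm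
  all_goals simp [cherryStars, reroute, flip]

lemma sup_totalDeg_cherryStars (hk : 2 ≤ k) :
    (univ.sup fun v => outDeg (cherryStars k) v + inDeg (cherryStars k) v) = k :=
  le_antisymm (Finset.sup_le fun v _ => totalDeg_cherryStars_le hk v)
    ((totalDeg_cherryStars_center k).symm.trans_le
      (Finset.le_sup (f := fun v => outDeg (cherryStars k) v + inDeg (cherryStars k) v)
        (mem_univ _)))

lemma converseInvariant_cherryStars (hk : k ≠ 2) : ConverseInvariant (cherryStars k) :=
  converseInvariant_of_cherry (outDeg_cherryStars_eq_two_iff hk) (cherryStars_reroute k)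

end CherryStars

end

/-- For every `k ≥ 3` there is a converse invariant orgraph with maximum degree
`k` that is not isomorphic to its converse. -/
theorem stmt_15 (k : ℕ) (hk : 3 ≤ k) :
    ∃ (n : ℕ) (A : Fin n → Fin n → Prop),
      IsOrgraph A ∧
      (Finset.univ.sup fun v => outDeg A v + inDeg A v) = k ∧
      (¬ ∃ e : Fin n ≃ Fin n, ∀ a b, A a b ↔ A (e b) (e a)) ∧
      ConverseInvariant A := by
  have hk2 : k ≠ 2 := by omega
  let E := Fintype.equivFin (Option (Fin 2) ⊕ Option (Fin k) ⊕ Option (Fin k))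
  refine ⟨_, fun a b => cherryStars k (E.symm a) (E.symm b), (isOrgraph_cherryStars k).comp _,
    (sup_totalDeg_comp_equiv E.symm _).trans (sup_totalDeg_cherryStars (by omega)), ?_,
    (converseInvariant_cherryStars hk2).comp_equiv E.symm⟩
  refine not_antiautomorphism_of_outDeg (m := 2) ⟨E (.inl none), ?_⟩ fun v => ?_
  · rw [outDeg_comp_equiv, E.symm_apply_apply, outDeg_cherryStars_eq_two_iff hk2]
  · rw [inDeg_comp_equiv]
    exact inDeg_cherryStars_ne_two hk2 _
end

section
/- Let D be an orientation of the star K_{1,d} with d ≥ 3. Then D is converse invariant if and only if D ≅ −D, i.e., if and only if the central vertex has equal out-degree and in-degree (in particular d must be even). -/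
open Finset Polynomial

/-! In a tournament `T` on `d + 1` vertices a copy of an oriented `K_{1,d}` is spanning and
is determined by its centre `u`: its arcs are exactly the arcs of `T` at `u`. So the copies
of a star whose centre has out-degree `p` correspond to the vertices of `T` of score `p`, and
those of its converse to the vertices of score `q = d - p`. Reversing the arc between `m` and
`m + 2` in the transitive tournament (where vertex `i` has score `i`) leaves three vertices
of score `m + 1` and none of score `m` or `m + 2`; a suitable `m` separates `p` from `q`
whenever `p ≠ q` and `d ≥ 3`. Conversely, `p = q` makes the star isomorphic to its
converse, and isomorphic digraphs have equally many copies in every host. -/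

theorem copyCount_congr {V V' W : Type*} {A : V → V → Prop} {A' : V' → V' → Prop}
    (B : W → W → Prop) (e : V ≃ V') (he : ∀ a b, A a b ↔ A' (e a) (e b)) :
    copyCount A B = copyCount A' B := by
  refine Nat.card_congr (Equiv.subtypeEquivRight fun p => and_congr_right fun _ => ?_)
  refine ⟨fun ⟨f, hf⟩ => ⟨e.symm.trans f, fun a b => ?_⟩,
    fun ⟨f, hf⟩ => ⟨e.trans f, fun a b => (he a b).trans (hf _ _)⟩⟩
  simpa using (he (e.symm a) (e.symm b)).symm.trans (hf _ _)

theorem outDeg_congr {V W : Type*} {A : V → V → Prop} {B : W → W → Prop} (f : V ≃ W)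
    (hf : ∀ a b, A a b ↔ B (f a) (f b)) (c : V) : outDeg A c = outDeg B (f c) :=
  Nat.card_congr (f.subtypeEquiv fun v => hf c v)

theorem exists_equiv_apply_eq_and_iff {V W : Type*} [Fintype V] [Fintype W] (p : V → Prop)
    (q : W → Prop) {c : V} {u : W} (hc : ¬ p c) (hu : ¬ q u)
    (hcard : Fintype.card V = Fintype.card W) (hpq : Nat.card {v // p v} = Nat.card {w // q w}) :
    ∃ f : V ≃ W, f c = u ∧ ∀ v, p v ↔ q (f v) := by
  classical
  rw [Nat.card_eq_fintype_card, Nat.card_eq_fintype_card] at hpq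
  let e₁ : {v // p v} ≃ {w // q w} := Fintype.equivOfCardEq hpq
  let e₀ : {v // ¬ p v} ≃ {w // ¬ q w} :=
    Fintype.equivOfCardEq (by
      rw [Fintype.card_subtype_compl, Fintype.card_subtype_compl, hcard, hpq])
  let e₂ := e₀.trans (Equiv.swap (e₀ ⟨c, hc⟩) ⟨u, hu⟩)
  refine ⟨(Equiv.sumCompl p).symm.trans ((e₁.sumCongr e₂).trans (Equiv.sumCompl q)), ?_,
    fun v => ?_⟩
  · simp [Equiv.sumCompl_symm_apply_of_neg hc, e₂]
  · by_cases hv : p v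
    · simpa [Equiv.sumCompl_symm_apply_of_pos hv, hv] using (e₁ ⟨v, hv⟩).2
    · simpa [Equiv.sumCompl_symm_apply_of_neg hv, hv] using (e₂ ⟨v, hv⟩).2

theorem IsTournament.asymm {W : Type*} {B : W → W → Prop} (hB : IsTournament B) {a b : W}
    (hab : B a b) : ¬ B b a := by
  rcases eq_or_ne a b with rfl | hne
  · exact hB.1 a
  · exact (hB.2 a b hne).1 hab

theorem IsTournament.adj_or_adj {W : Type*} {B : W → W → Prop} (hB : IsTournament B)
    {a b : W} (hne : a ≠ b) : B a b ∨ B b a := by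
  by_cases hab : B a b
  · exact .inl hab
  · exact .inr (by simpa [hab] using (hB.2 b a hne.symm).2)

structure IsOrientedStar {V : Type*} (A : V → V → Prop) (c : V) : Prop where
  asymm : ∀ u v, A u v → ¬ A v u
  adj_iff : ∀ u v, (A u v ∨ A v u) ↔ ((u = c ∧ v ≠ c) ∨ (v = c ∧ u ≠ c))

def starAt {W : Type*} (B : W → W → Prop) (u : W) : W → W → Prop :=
  fun a b => B a b ∧ (a = u ∨ b = u)

theorem outDeg_starAt {W : Type*} (B : W → W → Prop) (u : W) :
    outDeg (starAt B u) u = outDeg B u :=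
  Nat.card_congr (Equiv.subtypeEquivRight fun v => by simp [starAt])

theorem IsTournament.isOrientedStar_starAt {W : Type*} {B : W → W → Prop}
    (hB : IsTournament B) (u : W) : IsOrientedStar (starAt B u) u := by
  refine ⟨fun a b h h' => hB.asymm h.1 h'.1, fun a b => ?_⟩
  rcases eq_or_ne a b with rfl | hab
  · simp [starAt, hB.1 a]
  · have hadj := hB.adj_or_adj hab
    have hasymm := hB.asymm (a := a) (b := b)
    simp only [starAt]
    by_cases hau : a = u <;> by_cases hbu : b = u <;> simp_all

namespace IsOrientedStar

variable {V W : Type*} {A : V → V → Prop} {B : W → W → Prop} {c : V} {u : W}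

theorem converse (hA : IsOrientedStar A c) : IsOrientedStar (fun a b => A b a) c :=
  ⟨fun a b h h' => hA.asymm a b h' h, fun a b => or_comm.trans (hA.adj_iff a b)⟩

theorem arc_iff (hA : IsOrientedStar A c) (a b : V) :
    A a b ↔ (a = c ∧ A c b) ∨ (b = c ∧ a ≠ c ∧ ¬ A c a) := by
  have hab := hA.adj_iff a b
  have hba := hA.asymm a b
  have hca := hA.adj_iff c a
  constructor
  · intro h
    rcases hab.1 (.inl h) with ⟨rfl, -⟩ | ⟨rfl, ha⟩
    · exact .inl ⟨rfl, h⟩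
    · exact .inr ⟨rfl, ha, hba h⟩
  · rintro (⟨rfl, h⟩ | ⟨rfl, ha, h⟩)
    · exact h
    · exact (hca.2 (.inl ⟨rfl, ha⟩)).resolve_left h

theorem of_equiv (hA : IsOrientedStar A c) (f : V ≃ W) (hf : ∀ a b, A a b ↔ B (f a) (f b)) :
    IsOrientedStar B (f c) := by
  have hf' : ∀ x y, B x y ↔ A (f.symm x) (f.symm y) := fun x y => by simp [hf]
  refine ⟨fun x y h h' => hA.asymm _ _ ((hf' x y).1 h) ((hf' y x).1 h'), fun x y => ?_⟩
  simp only [hf', hA.adj_iff, ne_eq, f.symm_apply_eq]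

theorem center_unique (hA : IsOrientedStar A c) {c' : V} (hA' : IsOrientedStar A c')
    (hV : ∃ v, v ≠ c ∧ v ≠ c') : c = c' := by
  obtain ⟨v, hvc, hvc'⟩ := hV
  have := (hA'.adj_iff c v).1 ((hA.adj_iff c v).2 (.inl ⟨rfl, hvc⟩))
  tauto

theorem outDeg_add_inDeg [Fintype V] (hA : IsOrientedStar A c) :
    outDeg A c + inDeg A c = Fintype.card V - 1 := by
  classical
  have hdisj : Disjoint ({v | A c v} : Finset V) ({v | A v c} : Finset V) :=
    Finset.disjoint_left.2 fun v hv hv' => hA.asymm _ _ (mem_filter.1 hv).2 (mem_filter.1 hv').2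
  have hadj : ({v | A c v ∨ A v c} : Finset V) = univ.erase c := by
    ext v
    simp [hA.adj_iff c v, eq_comm]
  simp only [outDeg, inDeg, Nat.card_eq_fintype_card, Fintype.card_subtype]
  rw [← card_union_of_disjoint hdisj, ← filter_or, hadj, card_erase_of_mem (mem_univ c),
    card_univ]

theorem exists_equiv [Fintype V] [Fintype W] (hA : IsOrientedStar A c)
    (hB : IsOrientedStar B u) (hcard : Fintype.card V = Fintype.card W)
    (hdeg : outDeg A c = outDeg B u) :
    ∃ f : V ≃ W, ∀ a b, A a b ↔ B (f a) (f b) := by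
  obtain ⟨f, hfc, hf⟩ := exists_equiv_apply_eq_and_iff (A c) (B u)
    (fun h => hA.asymm _ _ h h) (fun h => hB.asymm _ _ h h) hcard hdeg
  subst hfc
  refine ⟨f, fun a b => ?_⟩
  rw [hA.arc_iff, hB.arc_iff, f.injective.eq_iff, f.injective.eq_iff, f.injective.ne_iff, ← hf,
    ← hf]

theorem exists_equiv_converse_iff [Fintype V] (hA : IsOrientedStar A c)
    (hV : 3 ≤ Fintype.card V) :
    (∃ e : V ≃ V, ∀ a b, A a b ↔ A (e b) (e a)) ↔ outDeg A c = inDeg A c := by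
  refine ⟨fun ⟨e, he⟩ => ?_, hA.exists_equiv hA.converse rfl⟩
  have hec : e c = c := (hA.of_equiv (B := fun a b => A b a) e he).center_unique
    hA.converse (ENat.exists_ne_ne_of_three_le (by simpa using hV) _ _)
  calc outDeg A c = outDeg (fun a b => A b a) (e c) := outDeg_congr e he c
    _ = inDeg A c := by rw [hec]; rfl

theorem eq_starAt {R : W → W → Prop} (hR : IsOrientedStar R u) (hB : IsTournament B)
    (hRB : ∀ a b, R a b → B a b) : R = starAt B u := by
  funext a b
  refine propext ⟨fun h => ⟨hRB a b h, ?_⟩, ?_⟩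
  · have := (hR.adj_iff a b).1 (.inl h)
    tauto
  · rintro ⟨h, rfl | rfl⟩
    · have hb : b ≠ a := fun hb => hB.1 a (hb ▸ h)
      exact ((hR.adj_iff a b).2 (.inl ⟨rfl, hb⟩)).resolve_right
        fun h' => hB.asymm h (hRB _ _ h')
    · have ha : a ≠ b := fun ha => hB.1 b (ha ▸ h)
      exact ((hR.adj_iff a b).2 (.inr ⟨rfl, ha⟩)).resolve_right
        fun h' => hB.asymm h (hRB _ _ h')

theorem copyCount_eq [Fintype V] [Fintype W] (hA : IsOrientedStar A c) (hB : IsTournament B)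
    (hcard : Fintype.card V = Fintype.card W) (hW : 3 ≤ Fintype.card W) :
    copyCount A B = Nat.card {u // outDeg B u = outDeg A c} := by
  have hcopy (u : W) (hu : outDeg B u = outDeg A c) :
      ∃ e : V ≃ (Set.univ : Set W), ∀ a b, A a b ↔ starAt B u (e a) (e b) := by
    obtain ⟨f, hf⟩ := hA.exists_equiv (hB.isOrientedStar_starAt u) hcard
      (by rw [outDeg_starAt, hu])
    exact ⟨f.trans (Equiv.Set.univ W).symm, hf⟩
  symm
  refine Nat.card_eq_of_bijective (fun u => ⟨(Set.univ, starAt B u.1),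
    fun a b h => ⟨h.1, trivial, trivial⟩, hcopy u.1 u.2⟩) ⟨?_, ?_⟩
  · intro u u' h
    have h' : starAt B u.1 = starAt B u'.1 := congrArg (fun p => p.1.2) h
    refine Subtype.ext ((hB.isOrientedStar_starAt u.1).center_unique
      (h' ▸ hB.isOrientedStar_starAt u'.1) ?_)
    exact ENat.exists_ne_ne_of_three_le (by simpa using hW) u.1 u'.1
  · rintro ⟨⟨S, R⟩, hRB, e, he⟩
    have hS : S = Set.univ := by
      refine Set.eq_of_subset_of_ncard_le (Set.subset_univ S) ?_
      rw [Set.ncard_univ, ← Nat.card_coe_set_eq, ← Nat.card_congr e, Nat.card_eq_fintype_card,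
        Nat.card_eq_fintype_card, hcard]
    subst hS
    let f := e.trans (Equiv.Set.univ W)
    have hR : R = starAt B (f c) := (hA.of_equiv f he).eq_starAt hB fun a b h => (hRB a b h).1
    refine ⟨⟨f c, ?_⟩, ?_⟩
    · rw [outDeg_congr f he, hR, outDeg_starAt]
    · simp [hR]

end IsOrientedStar

theorem Fin.card_subtype_val (n : ℕ) (Q : ℕ → Prop) [DecidablePred Q] :
    Nat.card {i : Fin n // Q i} = #{y ∈ range n | Q y} := by
  rw [Nat.card_eq_fintype_card, Fintype.card_subtype, ← Nat.Iio_eq_range,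
    ← Fin.map_valEmbedding_univ, filter_map, card_map]
  rfl

def transitiveFlip (n m : ℕ) : Fin n → Fin n → Prop := fun i j =>
  ((j : ℕ) < i ∧ ¬ ((i : ℕ) = m + 2 ∧ (j : ℕ) = m)) ∨ ((i : ℕ) = m ∧ (j : ℕ) = m + 2)

theorem isTournament_transitiveFlip (n m : ℕ) : IsTournament (transitiveFlip n m) := by
  refine ⟨fun i => by simp only [transitiveFlip]; omega, fun i j hij => ?_⟩
  have : (i : ℕ) ≠ j := Fin.val_injective.ne hij
  simp only [transitiveFlip]
  omega

theorem outDeg_transitiveFlip {n m : ℕ} (hm : m + 2 < n) (i : Fin n) :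
    outDeg (transitiveFlip n m) i = if (i : ℕ) = m ∨ (i : ℕ) = m + 2 then m + 1 else i := by
  classical
  unfold outDeg transitiveFlip
  rw [Fin.card_subtype_val n
    (fun y => (y < i ∧ ¬ ((i : ℕ) = m + 2 ∧ y = m)) ∨ ((i : ℕ) = m ∧ y = m + 2))]
  split_ifs with hi
  · obtain hi | hi := hi
    · rw [show {y ∈ range n | _} = insert (m + 2) (range m) by
          ext; simp only [mem_filter, mem_range, mem_insert]; omega,
        card_insert_of_notMem (by simp), card_range]
    · rw [show {y ∈ range n | _} = (range (m + 2)).erase m by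
          ext; simp only [mem_filter, mem_range, mem_erase]; omega,
        card_erase_of_mem (by simp), card_range]
      rfl
  · rw [show {y ∈ range n | _} = range i by ext; simp only [mem_filter, mem_range]; omega,
      card_range]

theorem card_outDeg_transitiveFlip_eq {n m : ℕ} (hm : m + 2 < n) (x : ℕ) :
    Nat.card {i // outDeg (transitiveFlip n m) i = x} =
      if x = m + 1 then 3 else if x = m ∨ x = m + 2 then 0 else if x < n then 1 else 0 := by
  classical
  simp_rw [outDeg_transitiveFlip hm]
  rw [Fin.card_subtype_val n (fun y => (if y = m ∨ y = m + 2 then m + 1 else y) = x)]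
  split_ifs with h₁ h₂ h₃
  · rw [show {y ∈ range n | _} = {m, m + 1, m + 2} by
      ext; simp only [mem_filter, mem_range, mem_insert, mem_singleton]; split_ifs <;> omega]
    simp
  · rw [show {y ∈ range n | _} = ∅ by
      ext; simp only [mem_filter, mem_range, notMem_empty, iff_false]; split_ifs <;> omega,
      card_empty]
  · rw [show {y ∈ range n | _} = {x} by
      ext; simp only [mem_filter, mem_range, mem_singleton]; split_ifs <;> omega,
      card_singleton]
  · rw [show {y ∈ range n | _} = ∅ by
      ext; simp only [mem_filter, mem_range, notMem_empty, iff_false]; split_ifs <;> omega,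
      card_empty]

theorem exists_tournament_card_outDeg_ne {d p q : ℕ} (hd : 3 ≤ d) (hpq : p + q = d)
    (hne : p ≠ q) : ∃ B : Fin (d + 1) → Fin (d + 1) → Prop, IsTournament B ∧
      Nat.card {u // outDeg B u = p} ≠ Nat.card {u // outDeg B u = q} := by
  wlog hlt : q < p generalizing p q
  · obtain ⟨B, hB, hcard⟩ := this (q := p) (by omega) hne.symm (by omega)
    exact ⟨B, hB, hcard.symm⟩
  obtain rfl | hq := Nat.eq_zero_or_pos q
  · refine ⟨transitiveFlip (d + 1) 0, isTournament_transitiveFlip _ _, ?_⟩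
    rw [card_outDeg_transitiveFlip_eq (by omega), card_outDeg_transitiveFlip_eq (by omega)]
    split_ifs <;> omega
  · refine ⟨transitiveFlip (d + 1) (p - 1), isTournament_transitiveFlip _ _, ?_⟩
    rw [card_outDeg_transitiveFlip_eq (by omega), card_outDeg_transitiveFlip_eq (by omega)]
    split_ifs <;> omega

theorem stmt_16_general {V : Type} [Fintype V]
    (d : ℕ) (hd : 3 ≤ d) (hcard : Fintype.card V = d + 1)
    (c : V) (A : V → V → Prop)
    (hasym : ∀ u v, A u v → ¬ A v u)
    (hstar : ∀ u v, (A u v ∨ A v u) ↔ ((u = c ∧ v ≠ c) ∨ (v = c ∧ u ≠ c))) :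
    (ConverseInvariant A ↔ ∃ e : V ≃ V, ∀ a b, A a b ↔ A (e b) (e a)) ∧
    ((∃ e : V ≃ V, ∀ a b, A a b ↔ A (e b) (e a)) ↔ outDeg A c = inDeg A c) := by
  have hA : IsOrientedStar A c := ⟨hasym, hstar⟩
  have hself := hA.exists_equiv_converse_iff (by omega)
  refine ⟨⟨fun hCI => hself.2 ?_, fun ⟨e, he⟩ W _ B _ => copyCount_congr B e he⟩, hself⟩
  by_contra hne
  obtain ⟨B, hB, hBne⟩ := exists_tournament_card_outDeg_ne hd
    (by have := hA.outDeg_add_inDeg; omega) hne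
  have hcard' : Fintype.card V = Fintype.card (Fin (d + 1)) := by rw [hcard, Fintype.card_fin]
  have hcopies := hCI _ inferInstance B hB
  rw [hA.copyCount_eq hB hcard' (by omega), hA.converse.copyCount_eq hB hcard' (by omega)]
    at hcopies
  exact hBne hcopies

/-- An orientation of the star `K_{1,d}`, `d ≥ 3`, is converse invariant iff it
is isomorphic to its converse, iff the central vertex has equal out- and
in-degree. -/
theorem stmt_16 {V : Type} [Fintype V] [DecidableEq V]
    (d : ℕ) (hd : 3 ≤ d) (hcard : Fintype.card V = d + 1)
    (c : V) (A : V → V → Prop)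
    (hasym : ∀ u v, A u v → ¬ A v u)
    (hstar : ∀ u v, (A u v ∨ A v u) ↔ ((u = c ∧ v ≠ c) ∨ (v = c ∧ u ≠ c))) :
    (ConverseInvariant A ↔ ∃ e : V ≃ V, ∀ a b, A a b ↔ A (e b) (e a)) ∧
    ((∃ e : V ≃ V, ∀ a b, A a b ↔ A (e b) (e a)) ↔ outDeg A c = inDeg A c) :=
  stmt_16_general d hd hcard c A hasym hstar
end
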